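/- For a standard Young tableau T of hook shape (n−k, 1^{k−1}) with boxes labeled 1, …, n−1, reading its entries (first row then the rest of the first column) gives a word 1AB where AB is a shuffle of {2, …, n−1} with |B| = k−1; the signed enumeration ∑_T sign(T), where sign(T) is the sign of the permutation taking the standard (reading-order) filling to T, equals the evaluation of the Gaussian binomial C(n−2, k−1)_q at q = −1 up to absolute value. Hence the sign-imbalance of the hook (n−k, 1^{k−1}) equals C(⌊(n−2)/2⌋; ⌊(k−1)/2⌋, ⌊(n−k−1)/2⌋). -/

import Mathlib

/-- The cells of the hook shape (n-k, 1^{k-1}). -/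
def hookCells (n k : ℕ) : Finset (ℕ × ℕ) :=
  ({0} : Finset ℕ) ×ˢ Finset.range (n - k) ∪ Finset.range k ×ˢ ({0} : Finset ℕ)

/-- Standard Young tableau of hook shape (n-k, 1^{k-1}). -/
def IsHookSYT (n k : ℕ) (T : ℕ × ℕ → ℕ) : Prop :=
  (∀ c, c ∉ hookCells n k → T c = 0) ∧
  Set.BijOn T (hookCells n k : Set (ℕ × ℕ)) (Finset.Icc 1 (n - 1) : Finset ℕ) ∧
  (∀ i j j', (i, j) ∈ hookCells n k → (i, j') ∈ hookCells n k → j < j' →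
    T (i, j) < T (i, j')) ∧
  (∀ i i' j, (i, j) ∈ hookCells n k → (i', j) ∈ hookCells n k → i < i' →
    T (i, j) < T (i', j))

/-- The 0-based reading-order (standard filling) index of a cell of the hook:
the first row is read first, then the rest of the first column. -/
def stdIdx (n k : ℕ) (c : ℕ × ℕ) : ℕ := if c.1 = 0 then c.2 else (n - k) + c.1 - 1

/-- The filling of the hook obtained by applying the permutation σ to the
standard (reading-order) filling: the cell with standard entry m + 1 receives
the entry σ(m) + 1. -/
def fillingOfPerm (n k : ℕ) (σ : Equiv.Perm (Fin (n - 1))) (c : ℕ × ℕ) : ℕ :=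
  if c ∈ hookCells n k then
    (if h : stdIdx n k c < n - 1 then ((σ ⟨stdIdx n k c, h⟩ : Fin (n - 1)) : ℕ) + 1 else 0)
  else 0

/-- The Gaussian binomial coefficient C(m, r)_q as a polynomial in q. -/
noncomputable def gaussPoly (m r : ℕ) : Polynomial ℤ :=
  ∑ S ∈ (Finset.range m).powersetCard r, Polynomial.X ^ (∑ i ∈ S, i - r * (r - 1) / 2)

/-- C(N; a, b): 0 unless a + b = N, else N!/(a! b!). -/
def floorMultinomial (N a b : ℕ) : ℕ := if a + b = N then N.choose a else 0

/-!
In reading order (first row, then the leg below the corner) a filling of the hook is a standard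
Young tableau exactly when its permutation fixes the corner and is increasing on the arm positions
and on the leg positions: it is the shuffle determined by the set `C` of values placed in the leg,
a `(k-1)`-subset of `{1, …, n-2}`. Moving one element of `C` up by one multiplies the shuffle by an
adjacent transposition, so its sign is `(-1)^(∑ C)` up to a constant. The signed count is therefore
`±∑ (-1)^(∑ S)` over `(k-1)`-subsets `S` of `{0, …, n-3}`, which is `±` the Gaussian binomial at
`q = -1`. These alternating sums satisfy `G(m+1, r+1) = G(m, r+1) + (-1)^m G(m, r)`, whence
`G(m, r) = ±C(⌊m/2⌋, ⌊r/2⌋)`, or `0` when `m` is even and `r` odd.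
-/

open Finset Equiv

section Shuffle

variable {N : ℕ}

theorem orderEmbOfFin_comp_eq_iff {α β : Type*} [LinearOrder α] [LinearOrder β]
    {s : Finset α} {t : Finset β} {k : ℕ} (hs : #s = k) (ht : #t = k) (f : α → β) :
    (∀ i, f (s.orderEmbOfFin hs i) = t.orderEmbOfFin ht i) ↔
      Set.MapsTo f s t ∧ StrictMonoOn f s := by
  have hrange : ∀ x ∈ s, ∃ i, s.orderEmbOfFin hs i = x := fun x hx => by
    rw [← Set.mem_range, range_orderEmbOfFin]; exact hx
  constructor
  · intro h
    refine ⟨fun x hx => ?_, fun x hx y hy hxy => ?_⟩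
    · obtain ⟨i, rfl⟩ := hrange x hx
      rw [h]; exact orderEmbOfFin_mem t ht i
    · obtain ⟨i, rfl⟩ := hrange x hx
      obtain ⟨j, rfl⟩ := hrange y hy
      rw [h, h]
      exact (t.orderEmbOfFin ht).strictMono ((s.orderEmbOfFin hs).lt_iff_lt.1 hxy)
  · rintro ⟨hmaps, hmono⟩
    refine congrFun (orderEmbOfFin_unique ht (fun i => hmaps (orderEmbOfFin_mem s hs i)) ?_)
    exact fun i j hij => hmono (orderEmbOfFin_mem s hs i) (orderEmbOfFin_mem s hs j)
      ((s.orderEmbOfFin hs).strictMono hij)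

def sortedSumEquiv (A : Finset (Fin N)) {r : ℕ} (hA : #A = r) : Fin r ⊕ Fin (N - r) ≃ Fin N :=
  (Equiv.sumCongr (A.orderIsoOfFin hA).toEquiv
      ((Aᶜ).orderIsoOfFin (by simp [card_compl, hA])).toEquiv).trans
    ((Equiv.sumCongr (Equiv.refl _) (Equiv.subtypeEquivRight fun _ => mem_compl)).trans
      (Equiv.sumCompl (· ∈ A)))

/-- The shuffle carrying `A` increasingly onto `B` and `Aᶜ` increasingly onto `Bᶜ`
(the identity if `#A ≠ #B`). -/
def shufflePerm (A B : Finset (Fin N)) : Perm (Fin N) :=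
  if h : #A = #B then (sortedSumEquiv A rfl).symm.trans (sortedSumEquiv B h.symm) else 1

theorem eq_shufflePerm_iff {A B : Finset (Fin N)} (h : #A = #B) (σ : Perm (Fin N)) :
    σ = shufflePerm A B ↔ Set.MapsTo σ A B ∧ StrictMonoOn σ A ∧
      Set.MapsTo σ ↑Aᶜ ↑Bᶜ ∧ StrictMonoOn σ ↑Aᶜ := by
  have hc : #Aᶜ = N - #A := by simp [card_compl]
  have hc' : #Bᶜ = N - #A := by simp [card_compl, h]
  rw [shufflePerm, dif_pos h, Equiv.ext_iff, ← (sortedSumEquiv A rfl).forall_congr_right]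
  simp only [Equiv.trans_apply, Equiv.symm_apply_apply, Sum.forall]
  exact (and_congr (orderEmbOfFin_comp_eq_iff rfl h.symm σ)
    (orderEmbOfFin_comp_eq_iff hc hc' σ)).trans and_assoc

theorem shufflePerm_self (A : Finset (Fin N)) : shufflePerm A A = 1 := by
  ext x
  simp [shufflePerm]

theorem swap_strictMonoOn {j j' : Fin N} (hjj' : j'.val = j.val + 1) {s : Set (Fin N)}
    (hs : j ∉ s ∨ j' ∉ s) : StrictMonoOn (swap j j') s := by
  intro x hx y hy hxy
  rw [Fin.lt_def] at hxy ⊢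
  rw [swap_apply_def, swap_apply_def]
  split_ifs <;> subst_vars <;> simp_all [Fin.ext_iff] <;> omega

theorem swap_mem_insert_erase_iff {B : Finset (Fin N)} {j j' : Fin N} (hj : j ∈ B) (hj' : j' ∉ B)
    (y : Fin N) : swap j j' y ∈ insert j' (B.erase j) ↔ y ∈ B := by
  rw [swap_apply_def]
  split_ifs with h1 h2 <;> subst_vars
  · simpa using hj
  · simpa [hj'] using fun h : j = y => hj' (h ▸ hj)
  · simp [h1, h2]

theorem card_insert_erase {α : Type*} [DecidableEq α] {B : Finset α} {j j' : α} (hj : j ∈ B)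
    (hj' : j' ∉ B) : #(insert j' (B.erase j)) = #B := by
  rw [card_insert_of_notMem (fun h => hj' (mem_of_mem_erase h)), card_erase_add_one hj]

theorem shufflePerm_insert_erase {A B : Finset (Fin N)} (h : #A = #B) {j j' : Fin N}
    (hj : j ∈ B) (hj' : j' ∉ B) (hjj' : j'.val = j.val + 1) :
    shufflePerm A (insert j' (B.erase j)) = swap j j' * shufflePerm A B := by
  obtain ⟨hmaps, hmono, hmapsc, hmonoc⟩ := (eq_shufflePerm_iff h _).1 rfl
  have hmem := swap_mem_insert_erase_iff hj hj'
  symm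
  rw [eq_shufflePerm_iff (h.trans (card_insert_erase hj hj').symm), Perm.coe_mul]
  refine ⟨fun x hx => (hmem _).2 (hmaps hx),
    (swap_strictMonoOn hjj' (Or.inr hj')).comp hmono hmaps, fun x hx => ?_,
    (swap_strictMonoOn hjj' (Or.inl ?_)).comp hmonoc hmapsc⟩
  · simpa only [coe_compl, Set.mem_compl_iff, mem_coe, Function.comp_apply, hmem] using hmapsc hx
  · simpa using hj

theorem sum_val_insert_erase {B : Finset (Fin N)} {j j' : Fin N} (hj : j ∈ B) (hj' : j' ∉ B)
    (hjj' : j'.val = j.val + 1) :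
    ∑ x ∈ insert j' (B.erase j), x.val = ∑ x ∈ B, x.val + 1 := by
  rw [sum_insert (fun h => hj' (mem_of_mem_erase h)), ← sum_erase_add _ _ hj]
  omega

theorem exists_adjacent_of_not_isUpperSet {B : Finset (Fin N)}
    (hB : ¬IsUpperSet (B : Set (Fin N))) : ∃ j ∈ B, ∃ j' ∉ B, j'.val = j.val + 1 := by
  contrapose! hB
  intro x y hxy hx
  obtain ⟨d, hd⟩ := Nat.exists_eq_add_of_le (Fin.le_def.1 hxy)
  induction d generalizing y with
  | zero => rwa [Fin.ext hd]
  | succ d ih =>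
    by_contra hy
    exact hB ⟨x + d, by omega⟩ (ih (y := ⟨x + d, by omega⟩) (Fin.le_def.2 (by simp)) rfl) y hy
      (by simp; omega)

theorem eq_of_isUpperSet_of_card_eq {α : Type*} [LinearOrder α] {A B : Finset α}
    (hA : IsUpperSet (A : Set α)) (hB : IsUpperSet (B : Set α)) (h : #A = #B) : A = B := by
  rcases hA.total hB with hAB | hBA
  · exact eq_of_subset_of_card_le (coe_subset.1 hAB) h.ge
  · exact (eq_of_subset_of_card_le (coe_subset.1 hBA) h.le).symm

theorem exists_isUpperSet_apply_eq {α : Type*} {r : ℕ} (f : Finset (Fin N) → α)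
    (hf : ∀ B : Finset (Fin N), #B = r → ∀ j ∈ B, ∀ j' ∉ B, j'.val = j.val + 1 →
      f (insert j' (B.erase j)) = f B)
    (B : Finset (Fin N)) (hB : #B = r) :
    ∃ U : Finset (Fin N), IsUpperSet (U : Set (Fin N)) ∧ #U = r ∧ f U = f B := by
  by_cases hup : IsUpperSet (B : Set (Fin N))
  · exact ⟨B, hup, hB, rfl⟩
  obtain ⟨j, hj, j', hj', hjj'⟩ := exists_adjacent_of_not_isUpperSet hup
  have hcard : #(insert j' (B.erase j)) = r := (card_insert_erase hj hj').trans hB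
  obtain ⟨U, hU, hUcard, hfU⟩ := exists_isUpperSet_apply_eq f hf _ hcard
  exact ⟨U, hU, hUcard, hfU.trans (hf B hB j hj j' hj' hjj')⟩
termination_by r * N - ∑ x ∈ B, x.val
decreasing_by
  have hlt : ∑ x ∈ insert j' (B.erase j), x.val < ∑ _x ∈ insert j' (B.erase j), N :=
    sum_lt_sum_of_nonempty (insert_nonempty _ _) fun x _ => x.isLt
  rw [sum_const, hcard, smul_eq_mul] at hlt
  have := sum_val_insert_erase hj hj' hjj'
  omega

theorem apply_eq_of_adjacent_invariant {α : Type*} {r : ℕ} (f : Finset (Fin N) → α)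
    (hf : ∀ B : Finset (Fin N), #B = r → ∀ j ∈ B, ∀ j' ∉ B, j'.val = j.val + 1 →
      f (insert j' (B.erase j)) = f B)
    {A B : Finset (Fin N)} (hA : #A = r) (hB : #B = r) : f A = f B := by
  obtain ⟨U, hU, hUcard, hfU⟩ := exists_isUpperSet_apply_eq f hf A hA
  obtain ⟨V, hV, hVcard, hfV⟩ := exists_isUpperSet_apply_eq f hf B hB
  rw [← hfU, ← hfV, eq_of_isUpperSet_of_card_eq hU hV (hUcard.trans hVcard.symm)]

theorem sign_shufflePerm {A B : Finset (Fin N)} (h : #A = #B) :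
    Perm.sign (shufflePerm A B) = (-1) ^ (∑ x ∈ A, x.val + ∑ x ∈ B, x.val) := by
  have key := apply_eq_of_adjacent_invariant
    (fun C => Perm.sign (shufflePerm A C) * (-1) ^ ∑ x ∈ C, x.val) ?_ h.symm rfl
  · simp only [shufflePerm_self, map_one, one_mul] at key
    rw [pow_add, ← key, mul_assoc, ← pow_add, ← two_mul, pow_mul, Int.units_sq, one_pow, mul_one]
  · intro C hC j hj j' hj' hjj'
    rw [shufflePerm_insert_erase hC.symm hj hj' hjj', sum_val_insert_erase hj hj' hjj', map_mul,
      Perm.sign_swap (fun h => by simp [h] at hjj'), pow_succ]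
    simp

theorem eq_shufflePerm_image {A : Finset (Fin N)} {σ : Perm (Fin N)} (hmono : StrictMonoOn σ A)
    (hmonoc : StrictMonoOn σ ↑Aᶜ) : σ = shufflePerm A (A.image σ) :=
  (eq_shufflePerm_iff (card_image_of_injective _ σ.injective).symm σ).2
    ⟨fun _ => mem_image_of_mem σ, hmono,
      fun x hx => by simpa [σ.injective.mem_finset_image] using hx, hmonoc⟩

open scoped Classical in
theorem sum_sign_shuffles (A s : Finset (Fin N)) :
    ∑ σ ∈ univ.filter (fun σ : Perm (Fin N) =>
        StrictMonoOn σ A ∧ StrictMonoOn σ ↑Aᶜ ∧ A.image σ ⊆ s), (Perm.sign σ : ℤ) =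
      ∑ C ∈ s.powersetCard #A, (-1) ^ (∑ x ∈ A, x.val + ∑ x ∈ C, x.val) := by
  refine sum_bij (fun σ _ => A.image σ) ?_ ?_ ?_ ?_
  · intro σ hσ
    simp only [mem_filter, mem_univ, true_and] at hσ
    exact mem_powersetCard.2 ⟨hσ.2.2, card_image_of_injective _ σ.injective⟩
  · intro σ hσ τ hτ h
    simp only [mem_filter, mem_univ, true_and] at hσ hτ
    rw [eq_shufflePerm_image hσ.1 hσ.2.1, eq_shufflePerm_image hτ.1 hτ.2.1, h]
  · intro C hC
    obtain ⟨hCs, hCcard⟩ := mem_powersetCard.1 hC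
    obtain ⟨hmaps, hmono, -, hmonoc⟩ := (eq_shufflePerm_iff hCcard.symm _).1 rfl
    have himage : A.image (shufflePerm A C) = C :=
      eq_of_subset_of_card_le (image_subset_iff.2 hmaps)
        (by rw [card_image_of_injective _ (Equiv.injective _), hCcard])
    exact ⟨shufflePerm A C, mem_filter.2 ⟨mem_univ _, hmono, hmonoc, himage.subset.trans hCs⟩,
      himage⟩
  · intro σ hσ
    simp only [mem_filter, mem_univ, true_and] at hσ
    rw [congrArg Perm.sign (eq_shufflePerm_image hσ.1 hσ.2.1),
      sign_shufflePerm (card_image_of_injective _ σ.injective).symm]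
    push_cast
    rfl

end Shuffle

theorem sum_range_card_le_sum (S : Finset ℕ) : ∑ i ∈ range #S, i ≤ ∑ i ∈ S, i := by
  induction S using Finset.induction_on_max with
  | empty => simp
  | insert a s ha ih =>
    have has : a ∉ s := fun h => lt_irrefl a (ha a h)
    have hcard : #s ≤ a := by
      simpa using card_le_card (fun x hx => mem_range.2 (ha x hx) : s ⊆ range a)
    rw [card_insert_of_notMem has, sum_range_succ, sum_insert has]
    omega

def altSubsetSum (m r : ℕ) : ℤ := ∑ S ∈ (range m).powersetCard r, (-1) ^ ∑ i ∈ S, i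

theorem neg_one_pow_mul_gaussPoly_eval (m r : ℕ) :
    (-1) ^ (r * (r - 1) / 2) * (gaussPoly m r).eval (-1) = altSubsetSum m r := by
  simp only [gaussPoly, Polynomial.eval_finsetSum, Polynomial.eval_pow, Polynomial.eval_X,
    mul_sum, ← pow_add]
  refine sum_congr rfl fun S hS => ?_
  have := sum_range_card_le_sum S
  rw [(mem_powersetCard.1 hS).2, sum_range_id] at this
  congr 1
  omega

theorem altSubsetSum_succ_succ (m r : ℕ) :
    altSubsetSum (m + 1) (r + 1) = altSubsetSum m (r + 1) + (-1) ^ m * altSubsetSum m r := by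
  have hm : ∀ S ∈ (range m).powersetCard r, m ∉ S := fun S hS h =>
    notMem_range_self ((mem_powersetCard.1 hS).1 h)
  rw [altSubsetSum, range_add_one, powersetCard_succ_insert notMem_range_self, sum_union,
    sum_image (insert_erase_invOn.2.injOn.mono fun S hS => hm S hS), altSubsetSum, altSubsetSum,
    mul_sum]
  · congr 1
    refine sum_congr rfl fun S hS => ?_
    rw [sum_insert (hm S hS), pow_add]
  · rw [disjoint_left]
    intro S hS hS'
    obtain ⟨S', -, rfl⟩ := mem_image.1 hS'
    exact notMem_range_self ((mem_powersetCard.1 hS).1 (mem_insert_self m S'))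

theorem altSubsetSum_eq (m r : ℕ) :
    altSubsetSum m r =
      if m % 2 = 0 ∧ r % 2 = 1 then 0 else (-1) ^ (r / 2) * ((m / 2).choose (r / 2) : ℤ) := by
  induction m generalizing r with
  | zero =>
    rcases r with _ | r
    · simp [altSubsetSum]
    · rw [altSubsetSum, powersetCard_eq_empty.2 (by simp), sum_empty]
      split_ifs with h
      · rfl
      · rw [Nat.choose_eq_zero_of_lt (by omega)]; simp
  | succ m ih =>
    rcases r with _ | r
    · simp [altSubsetSum]
    rw [altSubsetSum_succ_succ, ih, ih]
    rcases Nat.mod_two_eq_zero_or_one m with hm | hm <;>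
      rcases Nat.mod_two_eq_zero_or_one r with hr | hr
    · rw [if_pos ⟨hm, by omega⟩, if_neg (by omega), if_neg (by omega),
        Even.neg_one_pow (Nat.even_iff.2 hm), show (r + 1) / 2 = r / 2 by omega,
        show (m + 1) / 2 = m / 2 by omega]
      ring
    · rw [if_neg (by omega), if_pos ⟨hm, hr⟩, if_neg (by omega),
        show (m + 1) / 2 = m / 2 by omega]
      ring
    · rw [if_neg (by omega), if_neg (by omega), if_pos (by omega),
        Odd.neg_one_pow (Nat.odd_iff.2 hm), show (r + 1) / 2 = r / 2 by omega]
      ring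
    · rw [if_neg (by omega), if_neg (by omega), if_neg (by omega),
        Odd.neg_one_pow (Nat.odd_iff.2 hm), show (r + 1) / 2 = r / 2 + 1 by omega,
        show (m + 1) / 2 = m / 2 + 1 by omega, Nat.choose_succ_succ]
      push_cast
      ring

theorem natAbs_altSubsetSum {m r : ℕ} (h : r ≤ m) :
    (altSubsetSum m r).natAbs = floorMultinomial (m / 2) (r / 2) ((m - r) / 2) := by
  rw [altSubsetSum_eq, floorMultinomial]
  split_ifs with h1 h2 h2
  · omega
  · rfl
  · simp [Int.natAbs_mul, Int.natAbs_pow]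
  · omega

theorem sum_powersetCard_erase_zero {N : ℕ} (hN : 0 < N) (r : ℕ) :
    ∑ C ∈ (univ.erase (⟨0, hN⟩ : Fin N)).powersetCard r, (-1 : ℤ) ^ ∑ x ∈ C, x.val =
      (-1) ^ r * altSubsetSum (N - 1) r := by
  have hmap : (univ.erase (⟨0, hN⟩ : Fin N)).map Fin.valEmbedding =
      (range (N - 1)).map (addRightEmbedding 1) := by
    ext y
    simp only [mem_map, mem_erase, mem_univ, and_true, Fin.valEmbedding_apply, mem_range,
      addRightEmbedding_apply]
    constructor
    · rintro ⟨x, hx, rfl⟩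
      exact ⟨x - 1, by omega, by have := Fin.val_ne_of_ne hx; simp at this; omega⟩
    · rintro ⟨a, ha, rfl⟩
      exact ⟨⟨a + 1, by omega⟩, by simp [Fin.ext_iff], rfl⟩
  calc ∑ C ∈ (univ.erase (⟨0, hN⟩ : Fin N)).powersetCard r, (-1 : ℤ) ^ ∑ x ∈ C, x.val
      = ∑ T ∈ ((univ.erase (⟨0, hN⟩ : Fin N)).map Fin.valEmbedding).powersetCard r,
          (-1 : ℤ) ^ ∑ y ∈ T, y := by
        rw [powersetCard_map, sum_map]
        simp only [RelEmbedding.coe_toEmbedding, mapEmbedding_apply, sum_map,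
          Fin.valEmbedding_apply]
    _ = ∑ S ∈ (range (N - 1)).powersetCard r, (-1 : ℤ) ^ (∑ i ∈ S, i + r) := by
        rw [hmap, powersetCard_map, sum_map]
        refine sum_congr rfl fun S hS => ?_
        simp [sum_add_distrib, (mem_powersetCard.1 hS).2]
    _ = (-1) ^ r * altSubsetSum (N - 1) r := by
        simp only [altSubsetSum, mul_sum, pow_add, mul_comm]

theorem forall_lt_iff_notMem_image {α : Type*} [LinearOrder α] [Fintype α] {A : Finset α}
    {σ : Perm α} {x₀ : α} (hbot : IsBot x₀) (hx₀ : x₀ ∉ A) (hmono : StrictMonoOn σ ↑Aᶜ) :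
    (∀ x ∈ A, σ x₀ < σ x) ↔ x₀ ∉ A.image σ := by
  constructor
  · intro h hx
    obtain ⟨x, hx, hσx⟩ := mem_image.1 hx
    have := h x hx
    rw [hσx] at this
    exact this.not_ge (hbot _)
  · intro h x hx
    have hfix : σ x₀ = x₀ := by
      by_contra hne
      have ht : σ.symm x₀ ∉ A := fun htA => h (mem_image.2 ⟨_, htA, σ.apply_symm_apply x₀⟩)
      have hlt : x₀ < σ.symm x₀ :=
        (hbot _).lt_of_ne fun h0 => hne (by simpa using congrArg σ h0)
      have := hmono (by simpa using hx₀) (by simpa using ht) hlt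
      rw [σ.apply_symm_apply] at this
      exact this.not_ge (hbot _)
    rw [hfix]
    exact (hbot _).lt_of_ne fun h0 => h (mem_image.2 ⟨x, hx, h0.symm⟩)

/-- The reading-order positions of the cells of the first column below the corner. -/
def hookLeg (n k : ℕ) : Finset (Fin (n - 1)) := univ.filter (fun x => n - k ≤ x.val)

section Hook

variable {n k : ℕ}

theorem mem_hookLeg {x : Fin (n - 1)} : x ∈ hookLeg n k ↔ n - k ≤ x.val := by simp [hookLeg]

theorem card_hookLeg (hkn : k < n) : #(hookLeg n k) = k - 1 := by
  have hmap : (hookLeg n k).map Fin.valEmbedding = Ico (n - k) (n - 1) := by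
    ext y
    simp only [mem_map, mem_hookLeg, Fin.valEmbedding_apply, mem_Ico]
    exact ⟨fun ⟨x, hx, hxy⟩ => hxy ▸ ⟨hx, x.isLt⟩, fun ⟨h1, h2⟩ => ⟨⟨y, h2⟩, h1, rfl⟩⟩
  rw [← card_map Fin.valEmbedding, hmap, Nat.card_Ico]
  omega

theorem mem_hookCells {i j : ℕ} :
    (i, j) ∈ hookCells n k ↔ (i = 0 ∧ j < n - k) ∨ (i < k ∧ j = 0) := by
  simp [hookCells]
  omega

theorem stdIdx_lt (hk : 1 ≤ k) (hkn : k < n) {c : ℕ × ℕ} (hc : c ∈ hookCells n k) :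
    stdIdx n k c < n - 1 := by
  obtain ⟨i, j⟩ := c
  rw [mem_hookCells] at hc
  unfold stdIdx
  split_ifs <;> omega

theorem fillingOfPerm_of_mem (hk : 1 ≤ k) (hkn : k < n) (σ : Perm (Fin (n - 1))) {c : ℕ × ℕ}
    (hc : c ∈ hookCells n k) :
    fillingOfPerm n k σ c = σ ⟨stdIdx n k c, stdIdx_lt hk hkn hc⟩ + 1 := by
  rw [fillingOfPerm, if_pos hc, dif_pos]

theorem stdIdx_injOn (hkn : k < n) : Set.InjOn (stdIdx n k) (hookCells n k) := by
  rintro ⟨i, j⟩ hc ⟨i', j'⟩ hc' h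
  rw [mem_coe, mem_hookCells] at hc hc'
  simp only [stdIdx] at h
  split_ifs at h <;> simp only [Prod.mk.injEq] <;> omega

theorem fillingOfPerm_arm (hk : 1 ≤ k) (hkn : k < n) (σ : Perm (Fin (n - 1))) {j : ℕ}
    (hj : j < n - k) {x : Fin (n - 1)} (hx : x.val = j) : fillingOfPerm n k σ (0, j) = σ x + 1 := by
  rw [fillingOfPerm_of_mem hk hkn σ (mem_hookCells.2 (Or.inl ⟨rfl, hj⟩))]
  congr 3
  exact Fin.ext (by simp [stdIdx, hx])

theorem fillingOfPerm_leg (hk : 1 ≤ k) (hkn : k < n) (σ : Perm (Fin (n - 1))) {i : ℕ}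
    (hi : 1 ≤ i) (hik : i < k) {x : Fin (n - 1)} (hx : x.val = n - k + i - 1) :
    fillingOfPerm n k σ (i, 0) = σ x + 1 := by
  rw [fillingOfPerm_of_mem hk hkn σ (mem_hookCells.2 (Or.inr ⟨hik, rfl⟩))]
  congr 3
  exact Fin.ext (by simp [stdIdx, hx]; omega)

theorem bijOn_fillingOfPerm (hk : 1 ≤ k) (hkn : k < n) (σ : Perm (Fin (n - 1))) :
    Set.BijOn (fillingOfPerm n k σ) (hookCells n k) (Icc 1 (n - 1) : Finset ℕ) := by
  refine ⟨fun c hc => ?_, fun c hc c' hc' h => ?_, fun v hv => ?_⟩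
  · rw [fillingOfPerm_of_mem hk hkn σ hc, mem_coe, mem_Icc]
    have := (σ ⟨stdIdx n k c, stdIdx_lt hk hkn hc⟩).isLt
    omega
  · rw [fillingOfPerm_of_mem hk hkn σ hc, fillingOfPerm_of_mem hk hkn σ hc'] at h
    exact stdIdx_injOn hkn hc hc' (Fin.ext_iff.1 (σ.injective (Fin.ext (Nat.add_right_cancel h))))
  · rw [mem_coe, mem_Icc] at hv
    obtain ⟨x, hx⟩ : ∃ x, σ x = ⟨v - 1, by omega⟩ := ⟨_, σ.apply_symm_apply _⟩
    have hxv : (σ x).val + 1 = v := by rw [hx, Fin.val_mk]; omega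
    by_cases hxa : x.val < n - k
    · exact ⟨(0, x.val), mem_hookCells.2 (Or.inl ⟨rfl, hxa⟩),
        by rw [fillingOfPerm_arm hk hkn σ hxa rfl, hxv]⟩
    · exact ⟨(x.val - (n - k) + 1, 0), mem_hookCells.2 (Or.inr ⟨by omega, rfl⟩),
        by rw [fillingOfPerm_leg hk hkn σ (by omega) (by omega) (x := x) (by omega), hxv]⟩

theorem rowCondition_fillingOfPerm_iff (hk : 1 ≤ k) (hkn : k < n) (σ : Perm (Fin (n - 1))) :
    (∀ i j j', (i, j) ∈ hookCells n k → (i, j') ∈ hookCells n k → j < j' →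
      fillingOfPerm n k σ (i, j) < fillingOfPerm n k σ (i, j')) ↔
    StrictMonoOn σ ↑(hookLeg n k)ᶜ := by
  constructor
  · intro h x hx y hy hxy
    simp only [coe_compl, Set.mem_compl_iff, mem_coe, mem_hookLeg, not_le] at hx hy
    have := h 0 x y (mem_hookCells.2 (Or.inl ⟨rfl, hx⟩)) (mem_hookCells.2 (Or.inl ⟨rfl, hy⟩)) hxy
    rwa [fillingOfPerm_arm hk hkn σ hx rfl, fillingOfPerm_arm hk hkn σ hy rfl,
      Nat.add_lt_add_iff_right] at this
  · intro h i j j' hc hc' hjj'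
    rw [mem_hookCells] at hc hc'
    obtain ⟨rfl, hj'⟩ : i = 0 ∧ j' < n - k := by omega
    have hj : j < n - k := by omega
    rw [fillingOfPerm_arm hk hkn σ hj (x := ⟨j, by omega⟩) rfl,
      fillingOfPerm_arm hk hkn σ hj' (x := ⟨j', by omega⟩) rfl, Nat.add_lt_add_iff_right]
    exact h (by simp [mem_hookLeg]; omega) (by simp [mem_hookLeg]; omega) (Fin.mk_lt_mk.2 hjj')

theorem colCondition_fillingOfPerm_iff (hk : 1 ≤ k) (hkn : k < n) (σ : Perm (Fin (n - 1))) :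
    (∀ i i' j, (i, j) ∈ hookCells n k → (i', j) ∈ hookCells n k → i < i' →
      fillingOfPerm n k σ (i, j) < fillingOfPerm n k σ (i', j)) ↔
    StrictMonoOn σ ↑(hookLeg n k) ∧ ∀ x ∈ hookLeg n k, σ ⟨0, by omega⟩ < σ x := by
  have hcorner := fillingOfPerm_arm hk hkn σ (j := 0) (x := ⟨0, by omega⟩) (by omega) rfl
  have hmem_corner : (0, 0) ∈ hookCells n k := mem_hookCells.2 (Or.inl ⟨rfl, by omega⟩)
  constructor
  · intro h
    refine ⟨fun x hx y hy hxy => ?_, fun x hx => ?_⟩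
    · rw [mem_coe, mem_hookLeg] at hx hy
      rw [Fin.lt_def] at hxy
      have := h (x - (n - k) + 1) (y - (n - k) + 1) 0
        (mem_hookCells.2 (Or.inr ⟨by omega, rfl⟩)) (mem_hookCells.2 (Or.inr ⟨by omega, rfl⟩))
        (by omega)
      rwa [fillingOfPerm_leg hk hkn σ (by omega) (by omega) (x := x) (by omega),
        fillingOfPerm_leg hk hkn σ (by omega) (by omega) (x := y) (by omega),
        Nat.add_lt_add_iff_right] at this
    · rw [mem_hookLeg] at hx
      have := h 0 (x - (n - k) + 1) 0 hmem_corner (mem_hookCells.2 (Or.inr ⟨by omega, rfl⟩))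
        (by omega)
      rwa [hcorner, fillingOfPerm_leg hk hkn σ (by omega) (by omega) (x := x) (by omega),
        Nat.add_lt_add_iff_right] at this
  · rintro ⟨hmono, hmin⟩ i i' j hc hc' hii'
    rw [mem_hookCells] at hc hc'
    obtain ⟨rfl, hi'⟩ : j = 0 ∧ i' < k := by omega
    rw [fillingOfPerm_leg hk hkn σ (by omega) hi' (x := ⟨n - k + i' - 1, by omega⟩) rfl]
    rcases Nat.eq_zero_or_pos i with rfl | hi
    · rw [hcorner, Nat.add_lt_add_iff_right]
      exact hmin _ (mem_hookLeg.2 (by simp; omega))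
    · rw [fillingOfPerm_leg hk hkn σ hi (by omega) (x := ⟨n - k + i - 1, by omega⟩) rfl,
        Nat.add_lt_add_iff_right]
      exact hmono (by simp [mem_hookLeg]; omega) (by simp [mem_hookLeg]; omega)
        (Fin.mk_lt_mk.2 (by omega))

theorem isHookSYT_fillingOfPerm_iff (hk : 1 ≤ k) (hkn : k < n) (σ : Perm (Fin (n - 1))) :
    IsHookSYT n k (fillingOfPerm n k σ) ↔ StrictMonoOn σ ↑(hookLeg n k)ᶜ ∧
      StrictMonoOn σ ↑(hookLeg n k) ∧ ∀ x ∈ hookLeg n k, σ ⟨0, by omega⟩ < σ x := by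
  rw [IsHookSYT, rowCondition_fillingOfPerm_iff hk hkn σ, colCondition_fillingOfPerm_iff hk hkn σ]
  exact ⟨fun h => h.2.2, fun h => ⟨fun c hc => if_neg hc, bijOn_fillingOfPerm hk hkn σ, h⟩⟩

end Hook

open scoped Classical in
theorem sum_sign_hookSYT {n k : ℕ} (hk : 1 ≤ k) (hkn : k < n) :
    ∑ σ ∈ univ.filter (fun σ : Perm (Fin (n - 1)) => IsHookSYT n k (fillingOfPerm n k σ)),
      (Perm.sign σ : ℤ) =
      (-1) ^ (∑ x ∈ hookLeg n k, x.val + (k - 1)) * altSubsetSum (n - 2) (k - 1) := by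
  have hbot : IsBot (⟨0, by omega⟩ : Fin (n - 1)) := fun y => Nat.zero_le y.val
  have hcorner : (⟨0, by omega⟩ : Fin (n - 1)) ∉ hookLeg n k := by
    rw [mem_hookLeg, Fin.val_mk]; omega
  have hfilter : univ.filter (fun σ : Perm (Fin (n - 1)) => IsHookSYT n k (fillingOfPerm n k σ)) =
      univ.filter (fun σ : Perm (Fin (n - 1)) => StrictMonoOn σ ↑(hookLeg n k) ∧
        StrictMonoOn σ ↑(hookLeg n k)ᶜ ∧ (hookLeg n k).image σ ⊆ univ.erase ⟨0, by omega⟩) := by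
    refine filter_congr fun σ _ => ?_
    rw [isHookSYT_fillingOfPerm_iff hk hkn, subset_erase]
    constructor
    · rintro ⟨harm, hleg, hmin⟩
      exact ⟨hleg, harm, subset_univ _, (forall_lt_iff_notMem_image hbot hcorner harm).1 hmin⟩
    · rintro ⟨hleg, harm, -, hmin⟩
      exact ⟨harm, hleg, (forall_lt_iff_notMem_image hbot hcorner harm).2 hmin⟩
  rw [hfilter, sum_sign_shuffles, card_hookLeg hkn, pow_add, mul_assoc,
    show n - 2 = n - 1 - 1 by omega, ← sum_powersetCard_erase_zero (by omega), mul_sum]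
  simp only [pow_add]

open scoped Classical in
theorem hook_sign_imbalance (n k : ℕ) (hk : 2 ≤ k) (hn : k + 2 ≤ n) :
    (∑ σ ∈ Finset.univ.filter
        (fun σ : Equiv.Perm (Fin (n - 1)) => IsHookSYT n k (fillingOfPerm n k σ)),
      (Equiv.Perm.sign σ : ℤ)).natAbs = ((gaussPoly (n - 2) (k - 1)).eval (-1)).natAbs ∧
    (∑ σ ∈ Finset.univ.filter
        (fun σ : Equiv.Perm (Fin (n - 1)) => IsHookSYT n k (fillingOfPerm n k σ)),
      (Equiv.Perm.sign σ : ℤ)).natAbs =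
      floorMultinomial ((n - 2) / 2) ((k - 1) / 2) ((n - k - 1) / 2) := by
  rw [sum_sign_hookSYT (by omega) (by omega)]
  refine ⟨?_, ?_⟩
  · rw [← neg_one_pow_mul_gaussPoly_eval]
    simp [Int.natAbs_mul]
  · rw [Int.natAbs_mul, natAbs_altSubsetSum (by omega), show n - 2 - (k - 1) = n - k - 1 by omega]
    simp
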